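/- For every m ∈ ℤ² with m + Λ0 ⊆ Λ1, the shifted filter c_m satisfies T(f̂)·c_m = 0, i.e. every integer shift of the coefficient sequence of μ0 that fits inside Λ1 lies in the nullspace of the structured matrix T(f̂). -/

import Mathlib

open MeasureTheory

noncomputable section

/-- The complex exponential `e^{2πi k·r}` for `k ∈ ℤ²`, `r ∈ ℝ²`. -/
def efun (k : ℤ × ℤ) (r : ℝ × ℝ) : ℂ :=
  Complex.exp (2 * Real.pi * Complex.I * ((k.1 : ℝ) * r.1 + (k.2 : ℝ) * r.2 : ℝ))

/-- The unit square `[0,1]²`. -/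
def square : Set (ℝ × ℝ) := Set.Icc (0, 0) (1, 1)

/-- Fourier coefficients `f̂[k] = ∫_{[0,1]²} f(r) e^{−2πi k·r} dr`. -/
def fourierCoeff2 (f : ℝ × ℝ → ℂ) (k : ℤ × ℤ) : ℂ :=
  ∫ r in square, f r * efun (-k) r

/-- The structured (multifold weighted Toeplitz) matrix `T(ĝ)`, the vertical concatenation
of blocks `T₁, T₂` with entries `Tᵢ(ĝ)[ℓ,k] = (ℓ−k)ᵢ · ĝ[ℓ−k]`, `ℓ ∈ Λ2`, `k ∈ Λ1`. -/
def Tmat (Λ1 Λ2 : Finset (ℤ × ℤ)) (g : ℤ × ℤ → ℂ) :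
    Matrix (Fin 2 × Λ2) Λ1 ℂ := fun p k =>
  (if p.1 = 0 then (((p.2 : ℤ × ℤ) - (k : ℤ × ℤ)).1 : ℂ)
    else (((p.2 : ℤ × ℤ) - (k : ℤ × ℤ)).2 : ℂ)) * g ((p.2 : ℤ × ℤ) - (k : ℤ × ℤ))

/-!
Write `n = ℓ - m` and `g(r) = μ0(r) e^{-2πi n·r} = ∑_{j ∈ Λ0} c[j] e^{-2πi (n - j)·r}`. Expanding
`f̂ = ∑ₚ aₚ χ̂_{Ωₚ}`, the `(i, ℓ)` entry of `T(f̂) c_m` is `(-2πi)⁻¹ ∑ₚ aₚ ∫_{Ωₚ} ∂ᵢ g`, and each of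
these integrals vanishes because `g` vanishes on `∂Ωₚ ⊆ Z(μ0)`. By Fubini it suffices to see this
on one-dimensional slices, where a bounded open set is the countable disjoint union of its
components, open intervals whose endpoints lie on its frontier, and the fundamental theorem of
calculus applies on each of them.
-/

open Set Bornology

theorem IsOpen.frontier_connectedComponentIn_subset {α : Type*} [TopologicalSpace α]
    [LocallyConnectedSpace α] {U : Set α} (hU : IsOpen U) (x : α) :
    frontier (connectedComponentIn U x) ⊆ frontier U := by
  intro y hy
  rw [hU.connectedComponentIn.frontier_eq] at hy
  rw [hU.frontier_eq]
  refine ⟨closure_mono (connectedComponentIn_subset U x) hy.1, fun hyU => hy.2 ?_⟩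
  obtain ⟨z, hzy, hzx⟩ :=
    mem_closure_iff_nhds.1 hy.1 _ (connectedComponentIn_mem_nhds (hU.mem_nhds hyU))
  rw [connectedComponentIn_eq hzx, ← connectedComponentIn_eq hzy]
  exact mem_connectedComponentIn hyU

theorem IsOpen.eq_Ioo_csInf_csSup {α : Type*} [ConditionallyCompleteLinearOrder α]
    [TopologicalSpace α] [OrderTopology α] [DenselyOrdered α] [NoMinOrder α] [NoMaxOrder α]
    {s : Set α} (hs : IsOpen s) (hc : IsConnected s) (hb : BddBelow s) (ha : BddAbove s) :
    s = Ioo (sInf s) (sSup s) :=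
  (interior_Icc (a := sInf s) ▸ interior_maximal (subset_Icc_csInf_csSup hb ha) hs).antisymm
    (hc.Ioo_csInf_csSup_subset hb ha)

theorem pairwiseDisjoint_connectedComponentIn_image {α : Type*} [TopologicalSpace α]
    (U : Set α) : (connectedComponentIn U '' U).PairwiseDisjoint id := by
  rintro _ ⟨x, -, rfl⟩ _ ⟨y, -, rfl⟩ hxy
  refine disjoint_left.2 fun z hzx hzy => hxy ?_
  rw [connectedComponentIn_eq hzx, connectedComponentIn_eq hzy]

theorem IsOpen.countable_connectedComponentIn_image {α : Type*} [TopologicalSpace α]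
    [TopologicalSpace.SeparableSpace α] [LocallyConnectedSpace α] {U : Set α} (hU : IsOpen U) :
    (connectedComponentIn U '' U).Countable :=
  (pairwiseDisjoint_connectedComponentIn_image U).countable_of_isOpen
    (by rintro _ ⟨x, -, rfl⟩; exact hU.connectedComponentIn)
    (by rintro _ ⟨x, hx, rfl⟩; exact ⟨x, mem_connectedComponentIn hx⟩)

theorem sUnion_connectedComponentIn_image {α : Type*} [TopologicalSpace α] (U : Set α) :
    ⋃₀ (connectedComponentIn U '' U) = U := by
  refine subset_antisymm (sUnion_subset ?_) fun x hx =>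
    ⟨_, mem_image_of_mem _ hx, mem_connectedComponentIn hx⟩
  rintro _ ⟨x, -, rfl⟩
  exact connectedComponentIn_subset U x

section VectorValued

variable {E : Type*} [NormedAddCommGroup E] [NormedSpace ℝ E] [CompleteSpace E]

theorem IsOpen.integral_deriv_eq_zero_of_eq_zero_on_frontier {U : Set ℝ} (hU : IsOpen U)
    (hb : IsBounded U) {φ φ' : ℝ → E} (hφ : ∀ x, HasDerivAt φ (φ' x) x) (hφ' : Continuous φ')
    (hv : ∀ x ∈ frontier U, φ x = 0) : ∫ x in U, φ' x = 0 := by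
  have hcomp : ∀ x ∈ U, ∫ y in connectedComponentIn U x, φ' y = 0 := by
    intro x hx
    have hCb : IsBounded (connectedComponentIn U x) := hb.subset (connectedComponentIn_subset U x)
    have hfrC := hU.frontier_connectedComponentIn_subset x
    obtain ⟨a, b, hab, hC⟩ : ∃ a b, a < b ∧ connectedComponentIn U x = Ioo a b :=
      have hCeq := hU.connectedComponentIn.eq_Ioo_csInf_csSup
        (isConnected_connectedComponentIn_iff.2 hx) hCb.bddBelow hCb.bddAbove
      ⟨_, _, nonempty_Ioo.1 (hCeq ▸ ⟨x, mem_connectedComponentIn hx⟩), hCeq⟩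
    rw [hC, frontier_Ioo hab] at hfrC
    rw [hC, ← integral_Ioc_eq_integral_Ioo, ← intervalIntegral.integral_of_le hab.le,
      intervalIntegral.integral_eq_sub_of_hasDerivAt (fun y _ => hφ y)
        (hφ'.intervalIntegrable a b), hv b (hfrC (by simp)), hv a (hfrC (by simp)), sub_zero]
  have := hU.countable_connectedComponentIn_image.to_subtype
  have hint : IntegrableOn φ' U :=
    (hφ'.continuousOn.integrableOn_compact hb.isCompact_closure).mono_set subset_closure
  rw [← sUnion_connectedComponentIn_image U, sUnion_eq_iUnion] at hint
  conv_lhs => rw [← sUnion_connectedComponentIn_image U, sUnion_eq_iUnion]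
  rw [integral_iUnion (s := fun C : connectedComponentIn U '' U => (C : Set ℝ))
    (by rintro ⟨_, x, -, rfl⟩; exact hU.connectedComponentIn.measurableSet)
    ((pairwiseDisjoint_connectedComponentIn_image U).subtype _ _) hint]
  exact (tsum_congr fun ⟨_, x, hx, rfl⟩ => hcomp x hx).trans tsum_zero

theorem IsOpen.integral_deriv_fst_eq_zero_of_eq_zero_on_frontier {Ω : Set (ℝ × ℝ)}
    (hΩ : IsOpen Ω) (hb : IsBounded Ω) {g g₁ : ℝ × ℝ → E}
    (hg : ∀ x y, HasDerivAt (fun x => g (x, y)) (g₁ (x, y)) x) (hg₁ : Continuous g₁)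
    (hv : ∀ r ∈ frontier Ω, g r = 0) : ∫ r in Ω, g₁ r = 0 := by
  have hint : Integrable (Ω.indicator g₁) (volume.prod volume) :=
    (integrable_indicator_iff hΩ.measurableSet).2
      ((hg₁.continuousOn.integrableOn_compact hb.isCompact_closure).mono_set subset_closure)
  rw [← integral_indicator hΩ.measurableSet, Measure.volume_eq_prod, integral_prod_symm _ hint]
  refine integral_eq_zero_of_ae (.of_forall fun y => ?_)
  have hcont : Continuous fun x : ℝ => (x, y) := by fun_prop
  have hslice := (hΩ.preimage hcont).integral_deriv_eq_zero_of_eq_zero_on_frontier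
    (hb.image_fst.subset fun x hx => ⟨_, hx, rfl⟩) (hg · y) (hg₁.comp hcont)
    fun x hx => hv _ (hcont.frontier_preimage_subset Ω hx)
  rwa [← integral_indicator (hΩ.preimage hcont).measurableSet] at hslice

end VectorValued

@[fun_prop]
theorem continuous_efun (k : ℤ × ℤ) : Continuous (efun k) := by
  unfold efun
  fun_prop

theorem efun_add (k l : ℤ × ℤ) (r : ℝ × ℝ) : efun (k + l) r = efun k r * efun l r := by
  simp only [efun, ← Complex.exp_add, Prod.fst_add, Prod.snd_add]
  push_cast
  ring_nf

theorem efun_swap (k : ℤ × ℤ) (r : ℝ × ℝ) : efun k r.swap = efun k.swap r := by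
  simp only [efun, Prod.fst_swap, Prod.snd_swap]
  ring_nf

theorem hasDerivAt_efun_fst (k : ℤ × ℤ) (x y : ℝ) :
    HasDerivAt (fun x => efun k (x, y)) (2 * Real.pi * Complex.I * k.1 * efun k (x, y)) x := by
  have hlin : HasDerivAt (fun x : ℝ => (k.1 * x + k.2 * y : ℝ)) (k.1 : ℝ) x := by
    simpa using ((hasDerivAt_id x).const_mul (k.1 : ℝ)).add_const ((k.2 : ℝ) * y)
  refine (hlin.ofReal_comp.const_mul (2 * Real.pi * Complex.I)).cexp.congr_deriv ?_
  simp only [efun]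
  push_cast
  ring

theorem IsOpen.sum_fst_mul_integral_efun_neg_mul_eq_zero {ι : Type*} {Ω : Set (ℝ × ℝ)}
    (hΩ : IsOpen Ω) (hb : IsBounded Ω) (s : Finset ι) (b : ι → ℂ) (κ : ι → ℤ × ℤ)
    (hv : ∀ r ∈ frontier Ω, ∑ j ∈ s, b j * efun (-κ j) r = 0) :
    ∑ j ∈ s, ((κ j).1 : ℂ) * (∫ r in Ω, efun (-κ j) r) * b j = 0 := by
  have hint : ∀ k, IntegrableOn (efun k) Ω := fun k =>
    ((continuous_efun k).continuousOn.integrableOn_compact hb.isCompact_closure).mono_set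
      subset_closure
  have hder : ∀ x y, HasDerivAt (fun x => ∑ j ∈ s, b j * efun (-κ j) (x, y))
      (∑ j ∈ s, -(2 * Real.pi * Complex.I) * ((κ j).1 * efun (-κ j) (x, y) * b j)) x :=
    fun x y => (HasDerivAt.fun_sum fun j _ =>
      (hasDerivAt_efun_fst (-κ j) x y).const_mul (b j)).congr_deriv
        (Finset.sum_congr rfl fun j _ => by push_cast [Prod.fst_neg]; ring)
  have h := hΩ.integral_deriv_fst_eq_zero_of_eq_zero_on_frontier
    (g := fun r => ∑ j ∈ s, b j * efun (-κ j) r)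
    (g₁ := fun r => ∑ j ∈ s, -(2 * Real.pi * Complex.I) * ((κ j).1 * efun (-κ j) r * b j))
    hb hder (by fun_prop) hv
  rw [integral_finsetSum s fun j _ => (((hint _).const_mul _).mul_const _).const_mul _] at h
  simp only [integral_const_mul, integral_mul_const, ← Finset.mul_sum] at h
  exact (mul_eq_zero.1 h).resolve_left (neg_ne_zero.2 Complex.two_pi_I_ne_zero)

theorem IsOpen.sum_snd_mul_integral_efun_neg_mul_eq_zero {ι : Type*} {Ω : Set (ℝ × ℝ)}
    (hΩ : IsOpen Ω) (hb : IsBounded Ω) (s : Finset ι) (b : ι → ℂ) (κ : ι → ℤ × ℤ)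
    (hv : ∀ r ∈ frontier Ω, ∑ j ∈ s, b j * efun (-κ j) r = 0) :
    ∑ j ∈ s, ((κ j).2 : ℂ) * (∫ r in Ω, efun (-κ j) r) * b j = 0 := by
  have hneg_swap : ∀ k r, efun (-k.swap) r = efun (-k) r.swap := fun k r =>
    (efun_swap (-k) r).symm
  have hswap := (hΩ.preimage continuous_swap).sum_fst_mul_integral_efun_neg_mul_eq_zero
    ((hb.image_snd.prod hb.image_fst).subset fun r hr => ⟨⟨_, hr, rfl⟩, ⟨_, hr, rfl⟩⟩) s b
    (fun j => (κ j).swap) fun r hr => by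
      simpa only [hneg_swap] using hv _ (continuous_swap.frontier_preimage_subset Ω hr)
  have hint : ∀ k : ℤ × ℤ, ∫ r in Prod.swap ⁻¹' Ω, efun (-k) r.swap = ∫ r in Ω, efun (-k) r :=
    fun k => (Measure.measurePreserving_swap (μ := volume) (ν := volume)).setIntegral_preimage_emb
      MeasurableEquiv.prodComm.measurableEmbedding _ _
  simpa only [hneg_swap, hint, Prod.fst_swap] using hswap

theorem Tmat_mulVec_shift_apply (Λ0 Λ1 Λ2 : Finset (ℤ × ℤ)) (g c : ℤ × ℤ → ℂ)
    (hc : ∀ k ∉ Λ0, c k = 0) (m : ℤ × ℤ) (hm : ∀ k ∈ Λ0, m + k ∈ Λ1) (p : Fin 2 × Λ2) :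
    (Tmat Λ1 Λ2 g).mulVec (fun k => c ((k : ℤ × ℤ) - m)) p =
      ∑ j ∈ Λ0, (if p.1 = 0 then (((p.2 : ℤ × ℤ) - m - j).1 : ℂ)
        else (((p.2 : ℤ × ℤ) - m - j).2 : ℂ)) * g ((p.2 : ℤ × ℤ) - m - j) * c j := by
  set F : ℤ × ℤ → ℂ := fun k => (if p.1 = 0 then (((p.2 : ℤ × ℤ) - k).1 : ℂ)
    else (((p.2 : ℤ × ℤ) - k).2 : ℂ)) * g ((p.2 : ℤ × ℤ) - k) * c (k - m)
  have hsub : Λ0.image (m + ·) ⊆ Λ1 := Finset.image_subset_iff.2 hm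
  have hF : ∀ k ∈ Λ1, k ∉ Λ0.image (m + ·) → F k = 0 := fun k _ hk => by
    simp only [F, hc (k - m) fun h => hk (Finset.mem_image.2 ⟨_, h, add_sub_cancel _ _⟩), mul_zero]
  calc (Tmat Λ1 Λ2 g).mulVec (fun k => c ((k : ℤ × ℤ) - m)) p = ∑ k ∈ Λ1, F k :=
        Finset.sum_coe_sort Λ1 F
    _ = ∑ j ∈ Λ0, F (m + j) := by
        rw [← Finset.sum_subset hsub hF, Finset.sum_image fun _ _ _ _ => add_left_cancel]
    _ = _ := by simp only [F, sub_add_eq_sub_sub, add_sub_cancel_left]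

theorem fourierCoeff2_sum_indicator {ι : Type*} [Fintype ι] {Ω : ι → Set (ℝ × ℝ)}
    (hmeas : ∀ i, MeasurableSet (Ω i)) (hsq : ∀ i, Ω i ⊆ square) (a : ι → ℂ) (d : ℤ × ℤ) :
    fourierCoeff2 (fun r => ∑ i, (Ω i).indicator (fun _ => a i) r) d =
      ∑ i, a i * ∫ r in Ω i, efun (-d) r := by
  have hint : ∀ i, IntegrableOn (fun r => a i * efun (-d) r) square := fun i =>
    (continuous_const.mul (continuous_efun _)).continuousOn.integrableOn_compact isCompact_Icc
  simp only [fourierCoeff2, Finset.sum_mul, ← indicator_mul_left]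
  rw [integral_finsetSum _ fun i _ => (hint i).indicator (hmeas i)]
  refine Finset.sum_congr rfl fun i _ => ?_
  rw [setIntegral_indicator (hmeas i), inter_eq_right.2 (hsq i), integral_const_mul]

theorem sum_mul_fourierCoeff2_sum_indicator_mul {ι κ : Type*} [Fintype ι]
    {Ω : ι → Set (ℝ × ℝ)} (hmeas : ∀ i, MeasurableSet (Ω i)) (hsq : ∀ i, Ω i ⊆ square)
    (a : ι → ℂ) (s : Finset κ) (w : κ → ℂ) (d : κ → ℤ × ℤ) (b : κ → ℂ) :
    ∑ j ∈ s, w j * fourierCoeff2 (fun r => ∑ i, (Ω i).indicator (fun _ => a i) r) (d j) * b j =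
      ∑ i, a i * ∑ j ∈ s, w j * (∫ r in Ω i, efun (-d j) r) * b j := by
  simp only [fourierCoeff2_sum_indicator hmeas hsq, Finset.mul_sum, Finset.sum_mul]
  rw [Finset.sum_comm]
  exact Finset.sum_congr rfl fun i _ => Finset.sum_congr rfl fun j _ => by ring

theorem sum_mul_efun_neg_sub (s : Finset (ℤ × ℤ)) (c : ℤ × ℤ → ℂ) (n : ℤ × ℤ) (r : ℝ × ℝ) :
    ∑ j ∈ s, c j * efun (-(n - j)) r = (∑ j ∈ s, c j * efun j r) * efun (-n) r := by
  rw [Finset.sum_mul]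
  refine Finset.sum_congr rfl fun j _ => ?_
  rw [neg_sub, sub_eq_add_neg, efun_add, mul_assoc]

theorem shifted_filter_annihilates_general
    (N : ℕ) (a : Fin N → ℂ) (Ω : Fin N → Set (ℝ × ℝ))
    (hopen : ∀ i, IsOpen (Ω i))
    (hsub : ∀ i, Ω i ⊆ Set.Ioo (0 : ℝ) 1 ×ˢ Set.Ioo (0 : ℝ) 1)
    (Λ0 Λ1 Λ2 : Finset (ℤ × ℤ))
    (c : ℤ × ℤ → ℂ) (hcsupp : ∀ k ∉ Λ0, c k = 0)
    (f : ℝ × ℝ → ℂ) (hf : f = fun r => ∑ i, (Ω i).indicator (fun _ => a i) r)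
    (hedge : (⋃ i, frontier (Ω i)) ⊆
      {r ∈ square | (∑ k ∈ Λ0, c k * efun k r) = 0}) :
    ∀ m : ℤ × ℤ, (∀ k ∈ Λ0, m + k ∈ Λ1) →
      (Tmat Λ1 Λ2 (fourierCoeff2 f)).mulVec (fun k => c ((k : ℤ × ℤ) - m)) = 0 := by
  intro m hm
  have hsq : ∀ i, Ω i ⊆ square := fun i r hr =>
    ⟨⟨(hsub i hr).1.1.le, (hsub i hr).2.1.le⟩, ⟨(hsub i hr).1.2.le, (hsub i hr).2.2.le⟩⟩
  have hbdd : ∀ i, IsBounded (Ω i) := fun i => isCompact_Icc.isBounded.subset (hsq i)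
  ext ⟨q, ℓ⟩
  set n := (ℓ : ℤ × ℤ) - m
  have hv : ∀ i, ∀ r ∈ frontier (Ω i), ∑ j ∈ Λ0, c j * efun (-(n - j)) r = 0 := fun i r hr => by
    rw [sum_mul_efun_neg_sub, (hedge (mem_iUnion.2 ⟨i, hr⟩)).2, zero_mul]
  rw [Tmat_mulVec_shift_apply Λ0 Λ1 Λ2 _ c hcsupp m hm, Pi.zero_apply, hf,
    sum_mul_fourierCoeff2_sum_indicator_mul (fun i => (hopen i).measurableSet) hsq]
  refine Finset.sum_eq_zero fun i _ => mul_eq_zero_of_right _ ?_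
  by_cases hq : q = 0 <;> simp only [hq, ↓reduceIte]
  · exact (hopen i).sum_fst_mul_integral_efun_neg_mul_eq_zero (hbdd i) Λ0 c (n - ·) (hv i)
  · exact (hopen i).sum_snd_mul_integral_efun_neg_mul_eq_zero (hbdd i) Λ0 c (n - ·) (hv i)

/-- Every integer shift of the coefficient sequence of the edge-set
polynomial `μ0` that fits inside `Λ1` lies in the nullspace of `T(f̂)`. -/
theorem shifted_filter_annihilates
    (N : ℕ) (a : Fin N → ℂ) (Ω : Fin N → Set (ℝ × ℝ))
    (hopen : ∀ i, IsOpen (Ω i)) (hbdd : ∀ i, Bornology.IsBounded (Ω i))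
    (hsub : ∀ i, Ω i ⊆ Set.Ioo (0 : ℝ) 1 ×ˢ Set.Ioo (0 : ℝ) 1)
    (hdisj : Pairwise (fun i j => Disjoint (Ω i) (Ω j)))
    (hnull : ∀ i, volume (frontier (Ω i)) = 0)
    (Λ0 Λ1 Λ2 : Finset (ℤ × ℤ))
    (hΛ0 : Λ0.Nonempty) (hΛ1 : Λ1.Nonempty) (hΛ2 : Λ2.Nonempty) (hΛ01 : Λ0 ⊆ Λ1)
    (c : ℤ × ℤ → ℂ) (hcsupp : ∀ k ∉ Λ0, c k = 0) (hc : ∃ k ∈ Λ0, c k ≠ 0)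
    (f : ℝ × ℝ → ℂ) (hf : f = fun r => ∑ i, (Ω i).indicator (fun _ => a i) r)
    (hedge : (⋃ i, frontier (Ω i)) ⊆
      {r ∈ square | (∑ k ∈ Λ0, c k * efun k r) = 0}) :
    ∀ m : ℤ × ℤ, (∀ k ∈ Λ0, m + k ∈ Λ1) →
      (Tmat Λ1 Λ2 (fourierCoeff2 f)).mulVec (fun k => c ((k : ℤ × ℤ) - m)) = 0 :=
  shifted_filter_annihilates_general N a Ω hopen hsub Λ0 Λ1 Λ2 c hcsupp f hf hedge
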